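/- Fine–Wilf style structure of periodic strings: if a string p of length m is periodic (not aperiodic), then there exist a string v of length q with 1 ≤ q ≤ m/2, an integer k ≥ 2, and a prefix u of v, such that p = v^k u, where q is the smallest positive shift d ≤ m/2 under which p agrees with itself, and moreover v is primitive (v is not a concatenation of two or more copies of a shorter string). -/

import Mathlib

/-!
A period `q` of `p` makes every letter equal to the letter at its residue mod `q`, which gives
`p = v^k u` with `v = p[0, q)` and `k = m / q ≥ 2` because `2q ≤ m`. If `v` were a power of a
shorter word of length `r ∣ q`, then every letter of `p` would equal the letter at its residue
mod `r`, so `r` would be a smaller period of `p`, contradicting the minimality of `q`.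
-/

namespace Fin

variable {α : Type*} {m : ℕ}

def IsPeriod (p : Fin m → α) (d : ℕ) : Prop :=
  ∀ k, ∀ hk : k < m, d ≤ k → p ⟨k, hk⟩ = p ⟨k - d, (Nat.sub_le k d).trans_lt hk⟩

theorem isPeriod_iff_apply_mod {p : Fin m → α} {d : ℕ} :
    IsPeriod p d ↔ ∀ j, ∀ hj : j < m, p ⟨j, hj⟩ = p ⟨j % d, (Nat.mod_le j d).trans_lt hj⟩ := by
  constructor
  · intro hp j
    induction j using Nat.strong_induction_on with
    | _ j ih =>
      intro hj
      rcases lt_or_ge j d with hjd | hdj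
      · simp only [Nat.mod_eq_of_lt hjd]
      · rcases Nat.eq_zero_or_pos d with rfl | hd
        · simp only [Nat.mod_zero]
        · rw [hp j hj hdj, ih (j - d) (by omega)]
          simp only [← Nat.mod_eq_sub_mod hdj]
  · intro hmod k hk hdk
    rw [hmod k hk, hmod (k - d) (by omega)]
    simp only [← Nat.mod_eq_sub_mod hdk]

theorem IsPeriod.of_dvd_of_prefix {p : Fin m → α} {q r : ℕ} (hq : IsPeriod p q) (hq0 : 0 < q)
    (hrq : r ∣ q)
    (hprefix : ∀ j, j < q → ∀ hj : j < m, p ⟨j, hj⟩ = p ⟨j % r, (Nat.mod_le j r).trans_lt hj⟩) :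
    IsPeriod p r := by
  refine isPeriod_iff_apply_mod.2 fun j hj => ?_
  have hjq : j % q < m := (Nat.mod_le j q).trans_lt hj
  rw [isPeriod_iff_apply_mod.1 hq j hj, hprefix _ (Nat.mod_lt j hq0) hjq]
  simp only [Nat.mod_mod_of_dvd j hrq]

end Fin

/-- Structure of periodic strings: if `p` of length `m` is periodic (some shift
`d` with `1 ≤ d ≤ m/2` agrees with `p` on the overlap), then, taking `q` to be
the least such shift (the period), `p = v^k u` where `v` is the prefix of `p` of
length `q`, `k = m / q ≥ 2`, `u` is a (proper) prefix of `v` of length `m % q`,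
and `v` is primitive. -/
theorem periodic_structure {α : Type*} {m : ℕ} (p : Fin m → α)
    (hper : ∃ d, 1 ≤ d ∧ d ≤ m / 2 ∧
      ∀ k, ∀ hk : k < m, d ≤ k → p ⟨k, hk⟩ = p ⟨k - d, by omega⟩) :
    ∃ q, 1 ≤ q ∧ q ≤ m / 2 ∧
      -- q is a period of p
      (∀ k, ∀ hk : k < m, q ≤ k → ∀ h : k - q < m, p ⟨k, hk⟩ = p ⟨k - q, h⟩) ∧
      -- q is the smallest positive shift under which p agrees with itself
      (∀ d, 1 ≤ d → d < q →
        ∃ k, ∃ hk : k < m, d ≤ k ∧ p ⟨k, hk⟩ ≠ p ⟨k - d, by omega⟩) ∧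
      -- p = v^k u with k ≥ 2 and u a proper prefix of v (|u| = m % q < q):
      (∃ k ulen, 2 ≤ k ∧ ulen < q ∧ m = k * q + ulen) ∧
      -- every character of p is the corresponding character of v = p[0..q-1]
      (∀ j, ∀ hj : j < m, ∀ h : j % q < m, p ⟨j, hj⟩ = p ⟨j % q, h⟩) ∧
      -- v is primitive: v is not a concatenation of ≥ 2 copies of a shorter string
      (∀ r, 1 ≤ r → r < q → r ∣ q →
        ∃ j, ∃ hj : j < q, ∃ h1 : j < m, ∃ h2 : j % r < m,
          p ⟨j, h1⟩ ≠ p ⟨j % r, h2⟩) := by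
  classical
  have hex : ∃ d, 1 ≤ d ∧ d ≤ m / 2 ∧ Fin.IsPeriod p d := hper
  obtain ⟨hq1, hqm, hq⟩ := Nat.find_spec hex
  have hmin : ∀ d, 1 ≤ d → d < Nat.find hex → ¬ Fin.IsPeriod p d := fun d hd1 hdq hd =>
    Nat.find_min hex hdq ⟨hd1, by omega, hd⟩
  refine ⟨Nat.find hex, hq1, hqm, fun k hk hqk _ => hq k hk hqk, ?_, ?_,
    fun j hj _ => Fin.isPeriod_iff_apply_mod.1 hq j hj, ?_⟩
  · intro d hd1 hdq
    simpa only [Fin.IsPeriod, not_forall, exists_prop, ne_eq] using hmin d hd1 hdq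
  · have h2q : 2 * Nat.find hex ≤ m := by
      have := Nat.div_mul_le_self m 2
      omega
    exact ⟨m / Nat.find hex, m % Nat.find hex, (Nat.le_div_iff_mul_le hq1).2 h2q,
      Nat.mod_lt m hq1, (Nat.div_add_mod' m _).symm⟩
  · intro r hr1 hrq hdvd
    by_contra! hprefix
    exact hmin r hr1 hrq (hq.of_dvd_of_prefix hq1 hdvd fun j hj h1 => hprefix j hj h1 _)
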